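/- arXiv:0902.4011 — 2 statements merged into one kernel-verified Lean document; each statement's English description precedes it below -/
import Mathlib

section
/- Let σ ∈ S_k and τ ∈ S_n with σ ≤ τ, and suppose that σ occurs exactly once in τ, with occurrence ⟨σ⟩. If the pair (⟨σ⟩, τ) is separated, then the Möbius function of the interval [σ, τ] in the permutation pattern poset satisfies μ(σ, τ) = (−1)^{n−k}. -/
/-- `f` gives an occurrence of the pattern `σ` in `τ`: the positions `f 0 < f 1 < ⋯`
carry letters of `τ` in the same relative order as `σ`. -/
def IsOccurrence {k n : ℕ} (σ : Equiv.Perm (Fin k)) (τ : Equiv.Perm (Fin n))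
    (f : Fin k → Fin n) : Prop :=
  StrictMono f ∧ ∀ i j : Fin k, σ i < σ j ↔ τ (f i) < τ (f j)

/-- Two sets of kept positions `S, S'` (each containing the marked positions `A`)
determine the same element of the occurrence poset: the words of `τ` read along `S`
and along `S'` are order isomorphic, with the marked positions corresponding. -/
def OccEquiv {n : ℕ} (τ : Equiv.Perm (Fin n)) (A S S' : Finset (Fin n)) : Prop :=
  ∃ g : {x // x ∈ S} ≃o {x // x ∈ S'},
    (∀ a b : {x // x ∈ S}, τ a.1 < τ b.1 ↔ τ (g a).1 < τ (g b).1) ∧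
    (∀ a : {x // x ∈ S}, a.1 ∈ A ↔ (g a).1 ∈ A)

/-- Representatives of elements of the occurrence poset with marked positions `A`
and ground set `U`: sets of kept positions between `A` and `U`. -/
def OccCarrier {n : ℕ} (A U : Finset (Fin n)) := {S : Finset (Fin n) // A ⊆ S ∧ S ⊆ U}

/-- The occurrence poset `[⟨σ⟩, τ]` (with ground set `U`): kept-position sets modulo
order isomorphism respecting the marked occurrence. -/
def OccPoset {n : ℕ} (τ : Equiv.Perm (Fin n)) (A U : Finset (Fin n)) :=
  Quot (fun S S' : OccCarrier A U => OccEquiv τ A S.1 S'.1)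

def occMk {n : ℕ} (τ : Equiv.Perm (Fin n)) (A U : Finset (Fin n)) (S : OccCarrier A U) :
    OccPoset τ A U :=
  Quot.mk _ S

/-- The partial order of the occurrence poset: deletion of unmarked letters. -/
def occLE {n : ℕ} (τ : Equiv.Perm (Fin n)) (A U : Finset (Fin n))
    (q q' : OccPoset τ A U) : Prop :=
  ∃ S S' : OccCarrier A U, q = occMk τ A U S ∧ q' = occMk τ A U S' ∧ S.1 ⊆ S'.1

/-- The bottom element `⟨σ⟩` of the occurrence poset. -/
def occBot {n : ℕ} (τ : Equiv.Perm (Fin n)) (A U : Finset (Fin n)) (h : A ⊆ U) :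
    OccPoset τ A U :=
  occMk τ A U ⟨A, subset_rfl, h⟩

/-- The top element `τ` of the occurrence poset. -/
def occTop {n : ℕ} (τ : Equiv.Perm (Fin n)) (A U : Finset (Fin n)) (h : A ⊆ U) :
    OccPoset τ A U :=
  occMk τ A U ⟨U, h, subset_rfl⟩

/-- `J` is an interval block of the pattern of `τ` restricted to the kept positions `S`:
`J` consists of at least two kept positions, consecutive among `S` both in position and
in value. -/
def IsBlockIn {n : ℕ} (τ : Equiv.Perm (Fin n)) (S J : Finset (Fin n)) : Prop :=
  J ⊆ S ∧ 2 ≤ J.card ∧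
    (∀ x ∈ J, ∀ y ∈ J, ∀ z ∈ S, x ≤ z → z ≤ y → z ∈ J) ∧
    (∀ x ∈ J, ∀ y ∈ J, ∀ z ∈ S, τ x ≤ τ z → τ z ≤ τ y → z ∈ J)

/-- The pair (marked occurrence `A`, permutation given by kept positions `S`) has an
interval block: an interval block disjoint from the occurrence. -/
def PairHasBlock {n : ℕ} (τ : Equiv.Perm (Fin n)) (A S : Finset (Fin n)) : Prop :=
  ∃ J : Finset (Fin n), IsBlockIn τ S J ∧ ∀ p ∈ J, p ∉ A

/-- An element of the occurrence poset is interval free if (a representative of) it has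
no interval block disjoint from the marked occurrence. -/
def occIntervalFree {n : ℕ} (τ : Equiv.Perm (Fin n)) (A U : Finset (Fin n))
    (q : OccPoset τ A U) : Prop :=
  ∃ S : OccCarrier A U, q = occMk τ A U S ∧ ¬ PairHasBlock τ A S.1

theorem OccEquiv.card_eq {n : ℕ} {τ : Equiv.Perm (Fin n)} {A S S' : Finset (Fin n)}
    (h : OccEquiv τ A S S') : S.card = S'.card := by
  obtain ⟨g, -, -⟩ := h
  simpa using Fintype.card_congr g.toEquiv

/-- The rank of an element of the occurrence poset: its number of letters minus `k`. -/
def occRank {n : ℕ} (τ : Equiv.Perm (Fin n)) (A U : Finset (Fin n)) (k : ℕ) :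
    OccPoset τ A U → ℕ :=
  Quot.lift (fun S => S.1.card - k) (fun S S' h => by
    have hc := OccEquiv.card_eq h
    show S.1.card - k = S'.1.card - k
    omega)

/-- Positions `p` and `q` lie in the same region: no position between them (inclusive)
is a marked position. -/
def SameRegion {n : ℕ} (A : Finset (Fin n)) (p q : Fin n) : Prop :=
  ∀ z : Fin n, min p q ≤ z → z ≤ max p q → z ∉ A

/-- The pair (occurrence with marked positions `A`, `τ`) is separated: any two letters in
the same region are separated in value by a letter of the occurrence. -/
def Separated {n : ℕ} (τ : Equiv.Perm (Fin n)) (A : Finset (Fin n)) : Prop :=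
  ∀ p q : Fin n, SameRegion A p q → τ p < τ q → ∃ a ∈ A, τ p < τ a ∧ τ a < τ q

/-- The letters at positions `p, q` (with `τ p < τ q`) are similar: same region, and no
letter of the occurrence lies strictly between them in value. -/
def SimilarPos {n : ℕ} (τ : Equiv.Perm (Fin n)) (A : Finset (Fin n)) (p q : Fin n) : Prop :=
  SameRegion A p q ∧ τ p < τ q ∧ ∀ a ∈ A, ¬ (τ p < τ a ∧ τ a < τ q)

/-- A group of similar letters: at least two letters, pairwise similar. -/
def IsSimilarGroup {n : ℕ} (τ : Equiv.Perm (Fin n)) (A : Finset (Fin n))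
    (G : Finset (Fin n)) : Prop :=
  2 ≤ G.card ∧ ∀ p ∈ G, ∀ q ∈ G, τ p < τ q → SimilarPos τ A p q

/-- A maximal group of similar letters: one contained in no strictly larger group. -/
def IsMaxSimilarGroup {n : ℕ} (τ : Equiv.Perm (Fin n)) (A : Finset (Fin n))
    (G : Finset (Fin n)) : Prop :=
  IsSimilarGroup τ A G ∧ ∀ G' : Finset (Fin n), IsSimilarGroup τ A G' → G ⊆ G' → G' = G

/-- The occurrence poset is a boolean algebra: isomorphic to the poset of all subsets of
a finite set, ordered by inclusion. -/
def IsBooleanOccPoset {n : ℕ} (τ : Equiv.Perm (Fin n)) (A U : Finset (Fin n)) : Prop :=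
  ∃ (m : ℕ) (e : OccPoset τ A U ≃ Finset (Fin m)),
    ∀ q q' : OccPoset τ A U, occLE τ A U q q' ↔ e q ⊆ e q'

/-- The pattern poset `P`: permutations of every length, a permutation of length `m` being
an element of `Equiv.Perm (Fin m)` (its standard form). -/
def PatternPoset := Σ m : ℕ, Equiv.Perm (Fin m)

/-- The order of the pattern poset: pattern containment. -/
def patternLE (a b : PatternPoset) : Prop :=
  ∃ f : Fin a.1 → Fin b.1, IsOccurrence a.2 b.2 f

/-- `b` covers `a` in the pattern poset: `a < b` and `b` has one letter more than `a`. -/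
def patternCovers (a b : PatternPoset) : Prop :=
  patternLE a b ∧ a ≠ b ∧ b.1 = a.1 + 1

/-! Because `σ` occurs only once in `τ`, every pattern `x` with `σ ≤ x ≤ τ` is `τ` restricted
to a set of positions containing the occurrence `⟨σ⟩`. Separation makes that set unique: an
unmarked letter of an occurrence of `x` is pinned down by its position and its value relative
to the marked letters, since two distinct letters that agree on both would lie in one region
with no marked value between them. Hence `B ↦ τ|(⟨σ⟩ ∪ B)` is an isomorphism from the Boolean
lattice of sets of the `n - k` unmarked positions onto `[σ, τ]`, and on a Boolean lattice
`μ(∅, B) = (-1) ^ |B|`. -/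

open Finset

theorem mobius_eq_neg_one_pow_card_of_boolean {P α : Type*} {le : P → P → Prop}
    {mu : P → P → ℤ} (hone : ∀ a, mu a a = 1)
    (hrec : ∀ a b, le a b → a ≠ b →
      mu a b = - ∑ᶠ x ∈ {x : P | le a x ∧ le x b ∧ x ≠ b}, mu a x)
    {U : Finset α} {φ : Finset α → P} (hinj : Set.InjOn φ ↑U.powerset)
    (hinterval : ∀ S ⊆ U, {x | le (φ ∅) x ∧ le x (φ S)} = φ '' ↑S.powerset) :
    ∀ S ⊆ U, mu (φ ∅) (φ S) = (-1) ^ S.card := by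
  classical
  intro S
  induction S using Finset.strongInduction with
  | H S ih =>
  intro hSU
  rcases S.eq_empty_or_nonempty with rfl | hS
  · simp [hone]
  have hinjS : Set.InjOn φ ↑S.powerset :=
    hinj.mono fun T hT => mem_powerset.2 ((mem_powerset.1 hT).trans hSU)
  have hSmem : φ S ∈ {x | le (φ ∅) x ∧ le x (φ S)} :=
    hinterval S hSU ▸ ⟨S, mem_powerset_self S, rfl⟩
  have hne : φ ∅ ≠ φ S := fun h =>
    hS.ne_empty (hinjS (empty_mem_powerset S) (mem_powerset_self S) h).symm
  have hlower : {x | le (φ ∅) x ∧ le x (φ S) ∧ x ≠ φ S} = φ '' ↑(S.powerset.erase S) := by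
    rw [coe_erase, hinjS.image_sdiff_subset (by simp), Set.image_singleton,
      ← hinterval S hSU]
    ext x
    simp [and_assoc]
  rw [hrec _ _ hSmem.1 hne, hlower, finsum_mem_image (hinjS.mono (by simp)),
    finsum_mem_coe_finset]
  have hsum : ∑ T ∈ S.powerset.erase S, mu (φ ∅) (φ T) =
      ∑ T ∈ S.powerset.erase S, (-1) ^ T.card := sum_congr rfl fun T hT => by
    have hTS : T ⊂ S :=
      (mem_powerset.1 (mem_of_mem_erase hT)).ssubset_of_ne (ne_of_mem_erase hT)
    exact ih T hTS (hTS.subset.trans hSU)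
  rw [hsum, sum_erase_eq_sub (mem_powerset_self S), sum_powerset_neg_one_pow_card_of_nonempty hS]
  ring

lemma Tuple.sort_inv_lt_sort_inv_iff {m : ℕ} {α : Type*} [LinearOrder α] {w : Fin m → α}
    (hw : Function.Injective w) (i j : Fin m) :
    (Tuple.sort w)⁻¹ i < (Tuple.sort w)⁻¹ j ↔ w i < w j := by
  have hmono : StrictMono (w ∘ Tuple.sort w) :=
    (Tuple.monotone_sort w).strictMono_of_injective (hw.comp (Tuple.sort w).injective)
  simpa using (hmono.lt_iff_lt (a := (Tuple.sort w)⁻¹ i) (b := (Tuple.sort w)⁻¹ j)).symm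

lemma Equiv.Perm.eq_of_lt_iff_lt {m : ℕ} {π ρ : Equiv.Perm (Fin m)}
    (h : ∀ i j, π i < π j ↔ ρ i < ρ j) : π = ρ := by
  have hmono : StrictMono (π * ρ⁻¹) := fun a b hab => by
    simpa [h] using hab
  exact mul_inv_eq_one.1 ((Equiv.Perm.monotone_iff _).1 hmono.monotone)

lemma Finset.exists_orderEmbOfFin_comp_eq {α : Type*} [LinearOrder α] {s : Finset α}
    {k m : ℕ} (hs : s.card = k) {g : Fin m → α} (hg : ∀ i, g i ∈ s) :
    ∃ h : Fin m → Fin k, s.orderEmbOfFin hs ∘ h = g := by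
  have hrange : ∀ i, ∃ j, s.orderEmbOfFin hs j = g i := fun i => by
    rw [← Set.mem_range, range_orderEmbOfFin]
    exact hg i
  choose h hh using hrange
  exact ⟨h, funext hh⟩

namespace IsOccurrence

variable {k m n : ℕ} {x : Equiv.Perm (Fin k)} {y : Equiv.Perm (Fin m)}
  {τ : Equiv.Perm (Fin n)}

lemma comp {g : Fin k → Fin m} {g' : Fin m → Fin n} (hg : IsOccurrence x y g)
    (hg' : IsOccurrence y τ g') : IsOccurrence x τ (g' ∘ g) :=
  ⟨hg'.1.comp hg.1, fun i j => (hg.2 i j).trans (hg'.2 _ _)⟩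

lemma of_comp {g : Fin k → Fin m} {g' : Fin m → Fin n} (hg' : IsOccurrence y τ g')
    (h : IsOccurrence x τ (g' ∘ g)) : IsOccurrence x y g :=
  ⟨fun _ _ hij => hg'.1.lt_iff_lt.1 (h.1 hij), fun i j => (h.2 i j).trans (hg'.2 _ _).symm⟩

lemma cmp_eq {g : Fin k → Fin n} (hg : IsOccurrence x τ g) (i j : Fin k) :
    cmp (τ (g i)) (τ (g j)) = cmp (x i) (x j) := by
  simp only [cmp, cmpUsing, hg.2]

end IsOccurrence

section Separated

variable {n : ℕ} {A : Finset (Fin n)}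

lemma sameRegion_of_cmp_eq {p q : Fin n} (hne : p ≠ q) (hpos : ∀ a ∈ A, cmp p a = cmp q a) :
    SameRegion A p q := by
  intro z hz₁ hz₂ hz
  have hlt := lt_iff_lt_of_cmp_eq_cmp (hpos z hz)
  have hgt := lt_iff_lt_of_cmp_eq_cmp (cmp_eq_cmp_symm.1 (hpos z hz))
  grind

lemma Separated.eq_of_cmp_eq {τ : Equiv.Perm (Fin n)} (hsep : Separated τ A) {p q : Fin n}
    (hpos : ∀ a ∈ A, cmp p a = cmp q a) (hval : ∀ a ∈ A, cmp (τ p) (τ a) = cmp (τ q) (τ a)) :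
    p = q := by
  by_contra hne
  rcases lt_or_gt_of_ne (τ.injective.ne hne) with hlt | hlt
  · obtain ⟨a, ha, hpa, haq⟩ := hsep p q (sameRegion_of_cmp_eq hne hpos) hlt
    exact haq.not_gt ((lt_iff_lt_of_cmp_eq_cmp (hval a ha)).1 hpa)
  · obtain ⟨a, ha, hqa, hap⟩ :=
      hsep q p (sameRegion_of_cmp_eq (Ne.symm hne) fun a ha => (hpos a ha).symm) hlt
    exact hap.not_gt ((lt_iff_lt_of_cmp_eq_cmp (hval a ha).symm).1 hqa)

end Separated

section PatternAt

variable {n : ℕ} (τ : Equiv.Perm (Fin n))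

/-- `(Tuple.sort w)⁻¹` sends each index to the rank of its letter in `w`. -/
noncomputable def patternAt (S : Finset (Fin n)) : PatternPoset :=
  ⟨S.card, (Tuple.sort (τ ∘ S.orderEmbOfFin rfl))⁻¹⟩

lemma isOccurrence_patternAt (S : Finset (Fin n)) :
    IsOccurrence (patternAt τ S).2 τ (S.orderEmbOfFin rfl) :=
  ⟨(S.orderEmbOfFin rfl).strictMono, Tuple.sort_inv_lt_sort_inv_iff
    (τ.injective.comp (S.orderEmbOfFin rfl).injective)⟩

lemma patternAt_image_eq {m : ℕ} {ρ : Equiv.Perm (Fin m)} {g : Fin m → Fin n}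
    (hg : IsOccurrence ρ τ g) : patternAt τ (univ.image g) = ⟨m, ρ⟩ := by
  set S := univ.image g
  have hcard : S.card = m := by simp [S, card_image_of_injective _ hg.1.injective]
  have hgS : g = S.orderEmbOfFin hcard :=
    orderEmbOfFin_unique hcard (fun i => mem_image_of_mem g (mem_univ i)) hg.1
  clear_value S
  subst hcard hgS
  refine Sigma.ext rfl (heq_of_eq (Equiv.Perm.eq_of_lt_iff_lt fun i j => ?_))
  exact ((isOccurrence_patternAt τ S).2 i j).trans (hg.2 i j).symm

lemma isOccurrence_of_patternAt_eq {S : Finset (Fin n)} {m : ℕ} {ρ : Equiv.Perm (Fin m)}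
    (h : patternAt τ S = ⟨m, ρ⟩) :
    ∃ hc : S.card = m, IsOccurrence ρ τ (S.orderEmbOfFin hc) := by
  obtain ⟨hc, hρ⟩ := Sigma.mk.inj_iff.1 h
  subst hc
  exact ⟨rfl, eq_of_heq hρ ▸ isOccurrence_patternAt τ S⟩

lemma patternLE_patternAt_of_subset {T T' : Finset (Fin n)} (hTT' : T ⊆ T') :
    patternLE (patternAt τ T) (patternAt τ T') := by
  obtain ⟨h, hh⟩ := exists_orderEmbOfFin_comp_eq (s := T') rfl
    (fun i => hTT' (orderEmbOfFin_mem T rfl i))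
  exact ⟨h, (isOccurrence_patternAt τ T').of_comp (hh ▸ isOccurrence_patternAt τ T)⟩

end PatternAt

section UniqueOccurrence

variable {k n : ℕ} {σ : Equiv.Perm (Fin k)} {τ : Equiv.Perm (Fin n)} {f : Fin k → Fin n}

lemma IsOccurrence.eq_of_comp_eq (hf : IsOccurrence σ τ f)
    (huniq : ∀ g, IsOccurrence σ τ g → g = f) (hsep : Separated τ (univ.image f))
    {m : ℕ} {x : Equiv.Perm (Fin m)} {g g' : Fin m → Fin n}
    (hg : IsOccurrence x τ g) (hg' : IsOccurrence x τ g') {h h' : Fin k → Fin m}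
    (hh : g ∘ h = f) (hh' : g' ∘ h' = f) : g = g' := by
  have hh'h : h' = h := by
    have hσx : IsOccurrence σ x h' := hg'.of_comp (hh' ▸ hf)
    exact hg.1.injective.comp_left ((huniq _ (hσx.comp hg)).trans hh.symm)
  rw [hh'h] at hh'
  subst hh
  have hgg' : ∀ i, g (h i) = g' (h i) := fun i => (congrFun hh' i).symm
  funext j
  refine hsep.eq_of_cmp_eq (fun a ha => ?_) (fun a ha => ?_) <;>
    obtain ⟨i, -, rfl⟩ := mem_image.1 ha
  · rw [Function.comp_apply, hg.1.cmp_map_eq, hgg', hg'.1.cmp_map_eq]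
  · rw [Function.comp_apply, hg.cmp_eq, hgg', hg'.cmp_eq]

lemma patternAt_injOn (hf : IsOccurrence σ τ f) (huniq : ∀ g, IsOccurrence σ τ g → g = f)
    (hsep : Separated τ (univ.image f)) :
    Set.InjOn (patternAt τ) {T | univ.image f ⊆ T} := by
  intro T hT T' hT' h
  obtain ⟨hc, hocc⟩ := isOccurrence_of_patternAt_eq τ h.symm
  obtain ⟨e, he⟩ := exists_orderEmbOfFin_comp_eq rfl fun i => hT (mem_image_of_mem f (mem_univ i))
  obtain ⟨e', he'⟩ :=
    exists_orderEmbOfFin_comp_eq hc fun i => hT' (mem_image_of_mem f (mem_univ i))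
  have heq := hf.eq_of_comp_eq huniq hsep (isOccurrence_patternAt τ T) hocc he he'
  apply coe_injective
  rw [← range_orderEmbOfFin T rfl, ← range_orderEmbOfFin T' hc, heq]

lemma exists_patternAt_eq_of_mem_interval (huniq : ∀ g, IsOccurrence σ τ g → g = f)
    {S : Finset (Fin n)} {x : PatternPoset}
    (hσx : patternLE ⟨k, σ⟩ x) (hxS : patternLE x (patternAt τ S)) :
    ∃ T, univ.image f ⊆ T ∧ T ⊆ S ∧ patternAt τ T = x := by
  obtain ⟨gS, hgS⟩ := hxS
  obtain ⟨gσ, hgσ⟩ := hσx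
  have hx : IsOccurrence x.2 τ (S.orderEmbOfFin rfl ∘ gS) :=
    hgS.comp (isOccurrence_patternAt τ S)
  have hfx : _ = f := huniq _ (hgσ.comp hx)
  refine ⟨univ.image (S.orderEmbOfFin rfl ∘ gS), ?_, ?_, patternAt_image_eq τ hx⟩
  · rw [← hfx]
    exact image_subset_iff.2 fun i _ => mem_image_of_mem _ (mem_univ _)
  · exact image_subset_iff.2 fun i _ => orderEmbOfFin_mem S rfl _

lemma patternAt_union_injOn (hf : IsOccurrence σ τ f)
    (huniq : ∀ g, IsOccurrence σ τ g → g = f) (hsep : Separated τ (univ.image f)) :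
    Set.InjOn (fun B => patternAt τ (univ.image f ∪ B)) ↑(univ.image f)ᶜ.powerset := by
  intro B hB B' hB' h
  have hunion : univ.image f ∪ B = univ.image f ∪ B' :=
    patternAt_injOn hf huniq hsep subset_union_left subset_union_left h
  rw [← union_sdiff_cancel_left (subset_compl_iff_disjoint_left.1 (mem_powerset.1 hB)), hunion,
    union_sdiff_cancel_left (subset_compl_iff_disjoint_left.1 (mem_powerset.1 hB'))]

lemma setOf_mem_interval_eq_image_patternAt_union (hf : IsOccurrence σ τ f)
    (huniq : ∀ g, IsOccurrence σ τ g → g = f) (S : Finset (Fin n)) :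
    {x | patternLE ⟨k, σ⟩ x ∧ patternLE x (patternAt τ (univ.image f ∪ S))} =
      (fun B => patternAt τ (univ.image f ∪ B)) '' ↑S.powerset := by
  ext x
  constructor
  · rintro ⟨hσx, hxS⟩
    obtain ⟨T, hAT, hTS, rfl⟩ := exists_patternAt_eq_of_mem_interval huniq hσx hxS
    exact ⟨T \ univ.image f, mem_powerset.2 (sdiff_le_iff.2 hTS),
      by simp [union_sdiff_of_subset hAT]⟩
  · rintro ⟨B, hB, rfl⟩
    rw [← patternAt_image_eq τ hf]
    exact ⟨patternLE_patternAt_of_subset τ subset_union_left,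
      patternLE_patternAt_of_subset τ (union_subset_union_right (mem_powerset.1 hB))⟩

end UniqueOccurrence

theorem mobius_pattern_poset_separated_single_occurrence_general {k n : ℕ}
    (σ : Equiv.Perm (Fin k)) (τ : Equiv.Perm (Fin n))
    (f : Fin k → Fin n) (hf : IsOccurrence σ τ f)
    (huniq : ∀ g : Fin k → Fin n, IsOccurrence σ τ g → g = f)
    (A : Finset (Fin n)) (hA : A = Finset.image f Finset.univ)
    (hsep : Separated τ A)
    (mu : PatternPoset → PatternPoset → ℤ)
    (hone : ∀ a, mu a a = 1)
    (hrec : ∀ a b, patternLE a b → a ≠ b →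
      mu a b = - ∑ᶠ x ∈ {x : PatternPoset | patternLE a x ∧ patternLE x b ∧ x ≠ b}, mu a x) :
    mu ⟨k, σ⟩ ⟨n, τ⟩ = (-1 : ℤ) ^ (n - k) := by
  subst hA
  have hbot : patternAt τ (univ.image f) = ⟨k, σ⟩ := patternAt_image_eq τ hf
  have htop : patternAt τ univ = ⟨n, τ⟩ := by
    simpa using patternAt_image_eq τ (g := id) ⟨strictMono_id, fun _ _ => Iff.rfl⟩
  have hcard : (univ.image f).card = k := by
    simp [card_image_of_injective _ hf.1.injective]
  have hmu := mobius_eq_neg_one_pow_card_of_boolean hone hrec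
    (patternAt_union_injOn hf huniq hsep)
    (fun S _ => by simpa [hbot] using setOf_mem_interval_eq_image_patternAt_union hf huniq S)
    _ subset_rfl
  simpa [hbot, htop, card_compl, hcard] using hmu

/-- if `σ` occurs exactly once in `τ`, with occurrence `⟨σ⟩`, and the pair
`(⟨σ⟩, τ)` is separated, then `μ(σ, τ) = (-1) ^ (n - k)` in the pattern poset. -/
theorem mobius_pattern_poset_separated_single_occurrence {k n : ℕ} (hk : 0 < k)
    (σ : Equiv.Perm (Fin k)) (τ : Equiv.Perm (Fin n))
    (f : Fin k → Fin n) (hf : IsOccurrence σ τ f)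
    (huniq : ∀ g : Fin k → Fin n, IsOccurrence σ τ g → g = f)
    (A : Finset (Fin n)) (hA : A = Finset.image f Finset.univ)
    (hsep : Separated τ A)
    (mu : PatternPoset → PatternPoset → ℤ)
    (hone : ∀ a, mu a a = 1)
    (hzero : ∀ a b, ¬ patternLE a b → mu a b = 0)
    (hrec : ∀ a b, patternLE a b → a ≠ b →
      mu a b = - ∑ᶠ x ∈ {x : PatternPoset | patternLE a x ∧ patternLE x b ∧ x ≠ b}, mu a x) :
    mu ⟨k, σ⟩ ⟨n, τ⟩ = (-1 : ℤ) ^ (n - k) :=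
  mobius_pattern_poset_separated_single_occurrence_general σ τ f hf huniq A hA hsep mu hone hrec
end

section
/- Let σ ∈ S_k and τ ∈ S_n with σ ≤ τ, let ⟨σ⟩ be an occurrence of σ in τ, and suppose the pair (⟨σ⟩, τ) is interval free. Then the Möbius function of the top interval computed in the subposet I(⟨σ⟩, τ) equals the Möbius function computed in the full occurrence poset: μ_{I(⟨σ⟩,τ)}(⟨σ⟩, τ) = μ_{[⟨σ⟩,τ]}(⟨σ⟩, τ). -/
/-!
If `q ∈ [⟨σ⟩, τ]` is not interval free, collapse an interval block of `q` disjoint from the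
occurrence to one of its letters. This gives `⟨σ⟩ < q' < q` such that an interval-free element
lies below `q` iff it lies below `q'`: it meets the block in at most one letter, and that letter
can be exchanged for the one that is kept. By induction, the recursion for `μ(⟨σ⟩, q)` then
becomes the sum of `μ(⟨σ⟩, ·)` over `[⟨σ⟩, q']`, which is zero. So `μ(⟨σ⟩, ·)` vanishes off
`I(⟨σ⟩, τ)`, the recursions for `μ` and `μ_I` agree on `I(⟨σ⟩, τ)`, and the two functions
coincide there, in particular at `τ`.
-/

section Mobius

variable {P : Type*} [PartialOrder P] {F : Set P} {b : P} {m : P → ℤ}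

/-- `m = μ_F(b, ·)`, the Möbius function of the subposet `F` with first argument `b`. -/
def IsMobiusFrom (F : Set P) (b : P) (m : P → ℤ) : Prop :=
  m b = 1 ∧ ∀ q ∈ F, b < q → m q = -∑ᶠ x ∈ F ∩ Set.Ico b q, m x

variable [Finite P]

theorem IsMobiusFrom.finsum_Icc_eq_zero (hm : IsMobiusFrom F b m) {q : P} (hqF : q ∈ F)
    (hbq : b < q) : ∑ᶠ x ∈ F ∩ Set.Icc b q, m x = 0 := by
  rw [← Set.Ico_insert_right hbq.le, Set.inter_insert_of_mem hqF,
    finsum_mem_insert _ (fun h => Set.right_notMem_Ico h.2) (Set.toFinite _), hm.2 q hqF hbq,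
    neg_add_cancel]

theorem IsMobiusFrom.eq_zero_of_notMem_of_collapse (hm : IsMobiusFrom Set.univ b m)
    (hcollapse : ∀ q, b ≤ q → q ∉ F →
      ∃ q', b < q' ∧ q' < q ∧ ∀ x ∈ F, b ≤ x → (x ≤ q ↔ x ≤ q'))
    {q : P} (hbq : b ≤ q) (hqF : q ∉ F) : m q = 0 := by
  induction q using WellFoundedLT.induction with
  | _ q ih =>
  obtain ⟨q', hbq', hq'q, hle⟩ := hcollapse q hbq hqF
  have hbq : b < q := hbq'.trans hq'q
  rw [hm.2 q trivial hbq, neg_eq_zero, ← hm.finsum_Icc_eq_zero trivial hbq', Set.univ_inter,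
    Set.univ_inter]
  refine finsum_mem_inter_support_eq' _ _ _ fun x hx => ?_
  refine ⟨fun ⟨hbx, hxq⟩ => ⟨hbx, ?_⟩, fun ⟨hbx, hxq'⟩ => ⟨hbx, hxq'.trans_lt hq'q⟩⟩
  have hxF : x ∈ F := by_contra fun hxF => hx (ih x hxq hbx hxF)
  exact (hle x hxF hbx).1 hxq.le

theorem IsMobiusFrom.eq_of_forall_notMem_eq_zero (hm : IsMobiusFrom Set.univ b m) {mF : P → ℤ}
    (hmF : IsMobiusFrom F b mF) (hzero : ∀ q, b ≤ q → q ∉ F → m q = 0)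
    {q : P} (hqF : q ∈ F) (hbq : b ≤ q) : mF q = m q := by
  induction q using WellFoundedLT.induction with
  | _ q ih =>
  rcases hbq.eq_or_lt with rfl | hbq
  · rw [hm.1, hmF.1]
  rw [hmF.2 q hqF hbq, hm.2 q trivial hbq, Set.univ_inter,
    finsum_mem_congr rfl fun x hx => ih x hx.2.2 hx.1 hx.2.1]
  refine congrArg _ (finsum_mem_inter_support_eq' _ _ _ fun x hx => ?_)
  exact ⟨fun h => h.2, fun h => ⟨by_contra fun hxF => hx (hzero x h.1 hxF), h⟩⟩

end Mobius

theorem lt_iff_lt_and_lt_iff_lt_of_notMem_uIcc {β : Type*} [LinearOrder β] {x y c : β}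
    (h : c ∉ Set.uIcc x y) : (x < c ↔ y < c) ∧ (c < x ↔ c < y) := by
  simp only [Set.mem_uIcc, not_or, not_and, not_le] at h
  grind

theorem lt_iff_lt_update_id {α β : Type*} [DecidableEq α] [LinearOrder β] (φ : α → β)
    {j j' a b : α} (ha : a ≠ j → φ a ∉ Set.uIcc (φ j) (φ j'))
    (hb : b ≠ j → φ b ∉ Set.uIcc (φ j) (φ j')) :
    φ a < φ b ↔ φ (Function.update id j j' a) < φ (Function.update id j j' b) := by
  simp only [Function.update_apply, id]
  by_cases haj : a = j <;> by_cases hbj : b = j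
  · simp [haj, hbj]
  · simpa [haj, hbj] using (lt_iff_lt_and_lt_iff_lt_of_notMem_uIcc (hb hbj)).1
  · simpa [haj, hbj] using (lt_iff_lt_and_lt_iff_lt_of_notMem_uIcc (ha haj)).2
  · simp [haj, hbj]

section OccEquiv

variable {n : ℕ} {τ : Equiv.Perm (Fin n)} {A S S' X : Finset (Fin n)}

theorem OccEquiv.refl (τ : Equiv.Perm (Fin n)) (A S : Finset (Fin n)) : OccEquiv τ A S S :=
  ⟨OrderIso.refl _, fun _ _ => Iff.rfl, fun _ => Iff.rfl⟩

theorem OccEquiv.symm (h : OccEquiv τ A S S') : OccEquiv τ A S' S := by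
  obtain ⟨g, hτ, hA⟩ := h
  refine ⟨g.symm, fun a b => ?_, fun a => ?_⟩
  · simpa using (hτ (g.symm a) (g.symm b)).symm
  · simpa using (hA (g.symm a)).symm

theorem OccEquiv.trans {S'' : Finset (Fin n)} (h : OccEquiv τ A S S')
    (h' : OccEquiv τ A S' S'') : OccEquiv τ A S S'' := by
  obtain ⟨g, hτ, hA⟩ := h
  obtain ⟨g', hτ', hA'⟩ := h'
  exact ⟨g.trans g', fun a b => (hτ a b).trans (hτ' (g a) (g b)),
    fun a => (hA a).trans (hA' (g a))⟩

theorem occMk_eq_occMk_iff {U : Finset (Fin n)} {S S' : OccCarrier A U} :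
    occMk τ A U S = occMk τ A U S' ↔ OccEquiv τ A S.1 S'.1 :=
  Quot.eq.trans (Equivalence.eqvGen_iff ⟨fun S => OccEquiv.refl τ A S.1, OccEquiv.symm,
    OccEquiv.trans⟩)

theorem OccEquiv.of_strictMono {Y : Finset (Fin n)} (F : {x // x ∈ X} → Fin n)
    (hF : StrictMono F) (hFY : ∀ a, F a ∈ Y) (hYF : ∀ y ∈ Y, ∃ a, F a = y)
    (hτ : ∀ a b, τ a.1 < τ b.1 ↔ τ (F a) < τ (F b)) (hA : ∀ a, a.1 ∈ A ↔ F a ∈ A) :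
    OccEquiv τ A X Y := by
  let f : {x // x ∈ X} → {y // y ∈ Y} := fun a => ⟨F a, hFY a⟩
  have hf : StrictMono f := fun a b hab => hF hab
  have hsurj : Function.Surjective f := fun ⟨y, hy⟩ =>
    (hYF y hy).imp fun a ha => Subtype.ext ha
  exact ⟨hf.orderIsoOfSurjective f hsurj, hτ, hA⟩

theorem OccEquiv.exists_subset_of_subset (h : OccEquiv τ A S S') (hAS' : A ⊆ S')
    (hXS : X ⊆ S) (hAX : A ⊆ X) : ∃ Y ⊆ S', A ⊆ Y ∧ OccEquiv τ A X Y := by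
  classical
  obtain ⟨g, hτ, hA⟩ := h
  let F : {x // x ∈ X} → Fin n := fun a => (g ⟨a, hXS a.2⟩).1
  refine ⟨X.attach.image F, ?_, fun a ha => ?_, OccEquiv.of_strictMono F ?_ ?_ ?_
    (fun a b => hτ ⟨a, hXS a.2⟩ ⟨b, hXS b.2⟩) (fun a => hA ⟨a, hXS a.2⟩)⟩
  · simp only [Finset.subset_iff, Finset.mem_image]
    rintro _ ⟨a, -, rfl⟩
    exact (g _).2
  · have hc : (g.symm ⟨a, hAS' ha⟩).1 ∈ A := (hA _).2 (by simpa using ha)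
    exact Finset.mem_image.2 ⟨⟨_, hAX hc⟩, Finset.mem_attach _ _, by simp [F]⟩
  · exact fun a b hab => g.strictMono (Subtype.mk_lt_mk.2 hab)
  · exact fun a => Finset.mem_image_of_mem F (Finset.mem_attach _ a)
  · simp

end OccEquiv

section Block

variable {n : ℕ} {τ : Equiv.Perm (Fin n)} {A S S' T J : Finset (Fin n)}

theorem IsBlockIn.inter (hJ : IsBlockIn τ S J) (hTS : T ⊆ S) (h2 : 2 ≤ (T ∩ J).card) :
    IsBlockIn τ T (T ∩ J) := by
  obtain ⟨-, -, hpos, hval⟩ := hJ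
  refine ⟨Finset.inter_subset_left, h2, ?_, ?_⟩ <;>
  · intro x hx y hy z hz hxz hzy
    rw [Finset.mem_inter] at hx hy ⊢
    first
    | exact ⟨hz, hpos x hx.2 y hy.2 z (hTS hz) hxz hzy⟩
    | exact ⟨hz, hval x hx.2 y hy.2 z (hTS hz) hxz hzy⟩

theorem IsBlockIn.notMem_uIcc (hJ : IsBlockIn τ S J) {j j' b : Fin n} (hj : j ∈ J)
    (hj' : j' ∈ J) (hb : b ∈ S) (hbJ : b ∉ J) :
    b ∉ Set.uIcc j j' ∧ τ b ∉ Set.uIcc (τ j) (τ j') := by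
  obtain ⟨-, -, hpos, hval⟩ := hJ
  simp only [Set.mem_uIcc]
  constructor <;> rintro (⟨h₁, h₂⟩ | ⟨h₁, h₂⟩)
  · exact hbJ (hpos j hj j' hj' b hb h₁ h₂)
  · exact hbJ (hpos j' hj' j hj b hb h₁ h₂)
  · exact hbJ (hval j hj j' hj' b hb h₁ h₂)
  · exact hbJ (hval j' hj' j hj b hb h₁ h₂)

theorem PairHasBlock.of_occEquiv (h : OccEquiv τ A S S') (hb : PairHasBlock τ A S) :
    PairHasBlock τ A S' := by
  classical
  obtain ⟨g, hτ, hA⟩ := h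
  obtain ⟨J, ⟨hJS, hJ2, hpos, hval⟩, hJA⟩ := hb
  let F : {x // x ∈ J} → Fin n := fun a => (g ⟨a, hJS a.2⟩).1
  have hF : Function.Injective F := fun a b hab =>
    Subtype.ext (Subtype.mk.inj (g.injective (Subtype.ext hab)))
  have hmem : ∀ z (hz : z ∈ S'), (g.symm ⟨z, hz⟩).1 ∈ J → z ∈ J.attach.image F :=
    fun z hz hc => Finset.mem_image.2 ⟨⟨_, hc⟩, Finset.mem_attach _ _, by simp [F]⟩
  have hτle : ∀ a b, τ a.1 ≤ τ b.1 ↔ τ (g a).1 ≤ τ (g b).1 := fun a b => by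
    simpa only [not_lt] using (hτ b a).not
  refine ⟨J.attach.image F, ⟨?_, ?_, ?_, ?_⟩, ?_⟩
  · simp only [Finset.subset_iff, Finset.mem_image]
    rintro _ ⟨a, -, rfl⟩
    exact (g _).2
  · rwa [Finset.card_image_of_injective _ hF, Finset.card_attach]
  · intro _ ha _ hb z hz haz hzb
    obtain ⟨a, -, rfl⟩ := Finset.mem_image.1 ha
    obtain ⟨b, -, rfl⟩ := Finset.mem_image.1 hb
    exact hmem z hz (hpos a a.2 b b.2 _ (g.symm ⟨z, hz⟩).2
      (g.le_symm_apply (x := ⟨a, hJS a.2⟩).2 haz)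
      (g.symm_apply_le.2 (show ⟨z, hz⟩ ≤ g ⟨b, hJS b.2⟩ from hzb)))
  · intro _ ha _ hb z hz haz hzb
    obtain ⟨a, -, rfl⟩ := Finset.mem_image.1 ha
    obtain ⟨b, -, rfl⟩ := Finset.mem_image.1 hb
    exact hmem z hz (hval a a.2 b b.2 _ (g.symm ⟨z, hz⟩).2
      ((hτle ⟨a, hJS a.2⟩ _).2 (by simpa using haz))
      ((hτle _ ⟨b, hJS b.2⟩).2 (by simpa using hzb)))
  · simp only [Finset.mem_image]
    rintro _ ⟨a, -, rfl⟩ ha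
    exact hJA a a.2 ((hA _).2 ha)

theorem IsBlockIn.occEquiv_insert_erase (hJ : IsBlockIn τ S J) (hJA : ∀ p ∈ J, p ∉ A)
    (hTS : T ⊆ S) {j j₀ : Fin n} (hj₀ : j₀ ∈ J) (hTJ : T ∩ J = {j}) :
    OccEquiv τ A T (insert j₀ (T.erase j)) := by
  classical
  have hj : j ∈ T ∩ J := hTJ ▸ Finset.mem_singleton_self j
  rw [Finset.mem_inter] at hj
  have hout : ∀ b ∈ T, b ≠ j → b ∉ Set.uIcc j j₀ ∧ τ b ∉ Set.uIcc (τ j) (τ j₀) :=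
    fun b hb hbj => hJ.notMem_uIcc hj.2 hj₀ (hTS hb) fun hbJ =>
      hbj (Finset.mem_singleton.1 (hTJ ▸ Finset.mem_inter.2 ⟨hb, hbJ⟩))
  let F : {x // x ∈ T} → Fin n := fun a => Function.update id j j₀ a
  refine OccEquiv.of_strictMono F (fun a b hab => ?_) (fun a => ?_) (fun y hy => ?_)
    (fun a b => lt_iff_lt_update_id τ (hout a a.2 · |>.2) (hout b b.2 · |>.2)) (fun a => ?_)
  · exact (lt_iff_lt_update_id id (hout a a.2 · |>.1) (hout b b.2 · |>.1)).1 hab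
  · by_cases ha : a.1 = j <;> simp [F, ha, a.2]
  · rcases Finset.mem_insert.1 hy with rfl | hy
    · exact ⟨⟨j, hj.1⟩, by simp [F]⟩
    · obtain ⟨hyj, hyT⟩ := Finset.mem_erase.1 hy
      exact ⟨⟨y, hyT⟩, by simp [F, hyj]⟩
  · by_cases ha : a.1 = j <;> simp [F, ha, hJA j hj.2, hJA j₀ hj₀]

theorem IsBlockIn.exists_occEquiv_subset_sdiff (hJ : IsBlockIn τ S J) (hJA : ∀ p ∈ J, p ∉ A)
    {j₀ : Fin n} (hj₀ : j₀ ∈ J) (hTS : T ⊆ S) (hAT : A ⊆ T) (hTJ : (T ∩ J).card ≤ 1) :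
    ∃ T' ⊆ S \ J.erase j₀, A ⊆ T' ∧ OccEquiv τ A T T' := by
  classical
  rcases (T ∩ J).eq_empty_or_nonempty with hTJ₀ | ⟨j, hj⟩
  · refine ⟨T, fun t ht => Finset.mem_sdiff.2 ⟨hTS ht, fun htJ => ?_⟩, hAT,
      OccEquiv.refl τ A T⟩
    exact Finset.notMem_empty t
      (hTJ₀ ▸ Finset.mem_inter.2 ⟨ht, Finset.mem_of_mem_erase htJ⟩)
  have hTJ₁ : T ∩ J = {j} :=
    Finset.eq_singleton_iff_unique_mem.2 ⟨hj, fun x hx => Finset.card_le_one.1 hTJ x hx j hj⟩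
  rw [Finset.mem_inter] at hj
  refine ⟨insert j₀ (T.erase j), fun y hy => ?_, fun a ha => ?_,
    hJ.occEquiv_insert_erase hJA hTS hj₀ hTJ₁⟩
  · rw [Finset.mem_sdiff]
    rcases Finset.mem_insert.1 hy with rfl | hy
    · exact ⟨hJ.1 hj₀, fun h => Finset.ne_of_mem_erase h rfl⟩
    · obtain ⟨hyj, hyT⟩ := Finset.mem_erase.1 hy
      exact ⟨hTS hyT, fun hyJ => hyj (Finset.mem_singleton.1
        (hTJ₁ ▸ Finset.mem_inter.2 ⟨hyT, Finset.mem_of_mem_erase hyJ⟩))⟩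
  · exact Finset.mem_insert_of_mem
      (Finset.mem_erase.2 ⟨fun haj => hJA j hj.2 (haj ▸ ha), hAT ha⟩)

end Block

section OccPoset

variable {n : ℕ} {τ : Equiv.Perm (Fin n)} {A U : Finset (Fin n)}

theorem OccPoset.exists_occMk (q : OccPoset τ A U) : ∃ S, occMk τ A U S = q :=
  Quot.exists_rep q

theorem exists_subset_of_occLE_occMk {q : OccPoset τ A U} {S' : OccCarrier A U}
    (h : occLE τ A U q (occMk τ A U S')) :
    ∃ T : OccCarrier A U, occMk τ A U T = q ∧ T.1 ⊆ S'.1 := by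
  obtain ⟨T₀, S₀, rfl, hS₀, hsub⟩ := h
  obtain ⟨Y, hYS', hAY, hY⟩ :=
    (occMk_eq_occMk_iff.1 hS₀.symm).exists_subset_of_subset S'.2.1 hsub T₀.2.1
  exact ⟨⟨Y, hAY, hYS'.trans S'.2.2⟩, occMk_eq_occMk_iff.2 hY.symm, hYS'⟩

theorem occLE_trans {q q' q'' : OccPoset τ A U} (h : occLE τ A U q q')
    (h' : occLE τ A U q' q'') : occLE τ A U q q'' := by
  obtain ⟨S', S'', rfl, rfl, hsub⟩ := h'
  obtain ⟨T, rfl, hTS'⟩ := exists_subset_of_occLE_occMk h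
  exact ⟨T, S'', rfl, rfl, hTS'.trans hsub⟩

theorem occLE_antisymm {q q' : OccPoset τ A U} (h : occLE τ A U q q')
    (h' : occLE τ A U q' q) : q = q' := by
  obtain ⟨S, S', rfl, rfl, hSS'⟩ := h
  obtain ⟨T, hT, hTS⟩ := exists_subset_of_occLE_occMk h'
  have hcard : S'.1.card ≤ S.1.card :=
    (occMk_eq_occMk_iff.1 hT).card_eq ▸ Finset.card_le_card hTS
  rw [Subtype.ext (Finset.eq_of_subset_of_card_le hSS' hcard)]

instance : PartialOrder (OccPoset τ A U) where
  le := occLE τ A U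
  le_refl q := by
    obtain ⟨S, rfl⟩ := q.exists_occMk
    exact ⟨S, S, rfl, rfl, subset_rfl⟩
  le_trans _ _ _ := occLE_trans
  le_antisymm _ _ := occLE_antisymm

instance : Finite (OccCarrier A U) := Subtype.finite

instance : Finite (OccPoset τ A U) := Quot.finite _

theorem occLE_iff_le {q q' : OccPoset τ A U} : occLE τ A U q q' ↔ q ≤ q' := Iff.rfl

theorem occMk_le_occMk {S S' : OccCarrier A U} (h : S.1 ⊆ S'.1) :
    occMk τ A U S ≤ occMk τ A U S' :=
  ⟨S, S', rfl, rfl, h⟩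

theorem occMk_lt_occMk {S S' : OccCarrier A U} (h : S.1 ⊂ S'.1) :
    occMk τ A U S < occMk τ A U S' :=
  (occMk_le_occMk h.subset).lt_of_ne fun he =>
    (Finset.card_lt_card h).ne (occMk_eq_occMk_iff.1 he).card_eq

theorem occBot_le (h : A ⊆ U) (q : OccPoset τ A U) : occBot τ A U h ≤ q := by
  obtain ⟨S, rfl⟩ := q.exists_occMk
  exact occMk_le_occMk S.2.1

theorem occIntervalFree_occMk_iff {S : OccCarrier A U} :
    occIntervalFree τ A U (occMk τ A U S) ↔ ¬ PairHasBlock τ A S.1 :=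
  ⟨fun ⟨_, hS, hfree⟩ hb => hfree (hb.of_occEquiv (occMk_eq_occMk_iff.1 hS)),
    fun h => ⟨S, rfl, h⟩⟩

theorem occIntervalFree_occBot (h : A ⊆ U) : occIntervalFree τ A U (occBot τ A U h) :=
  occIntervalFree_occMk_iff.2 fun ⟨J, ⟨hJS, hJ2, _⟩, hJA⟩ => by
    rw [Finset.eq_empty_of_forall_notMem fun p hp => hJA p hp (hJS hp)] at hJ2
    simp at hJ2

theorem exists_collapse_of_not_occIntervalFree (h : A ⊆ U) {q : OccPoset τ A U}
    (hq : ¬ occIntervalFree τ A U q) :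
    ∃ q', occBot τ A U h < q' ∧ q' < q ∧ ∀ x, occIntervalFree τ A U x → (x ≤ q ↔ x ≤ q') := by
  classical
  obtain ⟨S, rfl⟩ := q.exists_occMk
  obtain ⟨J, hJ, hJA⟩ := not_not.1 (occIntervalFree_occMk_iff.not.1 hq)
  obtain ⟨j₀, hj₀⟩ := Finset.card_pos.1 (by linarith [hJ.2.1])
  have hAS : A ⊆ S.1 \ J.erase j₀ := fun a ha =>
    Finset.mem_sdiff.2 ⟨S.2.1 ha, fun haJ => hJA a (Finset.mem_of_mem_erase haJ) ha⟩
  let S₀ : OccCarrier A U := ⟨S.1 \ J.erase j₀, hAS, Finset.sdiff_subset.trans S.2.2⟩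
  refine ⟨occMk τ A U S₀, occMk_lt_occMk ?_, occMk_lt_occMk ?_, fun x hx => ⟨fun hxS => ?_,
    fun hxS₀ => hxS₀.trans (occMk_le_occMk Finset.sdiff_subset)⟩⟩
  · refine (Finset.ssubset_iff_of_subset hAS).2 ⟨j₀, Finset.mem_sdiff.2 ⟨hJ.1 hj₀, ?_⟩, hJA j₀ hj₀⟩
    exact fun h => Finset.ne_of_mem_erase h rfl
  · refine Finset.sdiff_ssubset ((Finset.erase_subset _ _).trans hJ.1) ?_
    have := hJ.2.1
    rw [← Finset.card_pos, Finset.card_erase_of_mem hj₀]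
    omega
  · obtain ⟨T, rfl, hTS⟩ := exists_subset_of_occLE_occMk hxS
    have hTJ : (T.1 ∩ J).card ≤ 1 := by
      by_contra! h2
      exact occIntervalFree_occMk_iff.1 hx
        ⟨_, hJ.inter hTS h2, fun p hp => hJA p (Finset.mem_inter.1 hp).2⟩
    obtain ⟨T', hT'S, hAT', hTT'⟩ := hJ.exists_occEquiv_subset_sdiff hJA hj₀ hTS T.2.1 hTJ
    calc occMk τ A U T = occMk τ A U ⟨T', hAT', hT'S.trans S₀.2.2⟩ := occMk_eq_occMk_iff.2 hTT'
      _ ≤ occMk τ A U S₀ := occMk_le_occMk hT'S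

end OccPoset

theorem mobius_interval_free_subposet_eq_general {n : ℕ}
    (τ : Equiv.Perm (Fin n))
    (A : Finset (Fin n))
    (hfree : ¬ PairHasBlock τ A Finset.univ)
    (mu : OccPoset τ A Finset.univ → OccPoset τ A Finset.univ → ℤ)
    (hone : ∀ q, mu q q = 1)
    (hrec : ∀ q q', occLE τ A Finset.univ q q' → q ≠ q' →
      mu q q' = - ∑ᶠ x ∈ {x : OccPoset τ A Finset.univ |
        occLE τ A Finset.univ q x ∧ occLE τ A Finset.univ x q' ∧ x ≠ q'}, mu q x)
    (muI : OccPoset τ A Finset.univ → OccPoset τ A Finset.univ → ℤ)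
    (hIone : ∀ q, occIntervalFree τ A Finset.univ q → muI q q = 1)
    (hIrec : ∀ q q', occIntervalFree τ A Finset.univ q → occIntervalFree τ A Finset.univ q' →
      occLE τ A Finset.univ q q' → q ≠ q' →
      muI q q' = - ∑ᶠ x ∈ {x : OccPoset τ A Finset.univ | occIntervalFree τ A Finset.univ x ∧
        occLE τ A Finset.univ q x ∧ occLE τ A Finset.univ x q' ∧ x ≠ q'}, muI q x) :
    muI (occBot τ A Finset.univ (Finset.subset_univ A))
        (occTop τ A Finset.univ (Finset.subset_univ A)) =
      mu (occBot τ A Finset.univ (Finset.subset_univ A))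
        (occTop τ A Finset.univ (Finset.subset_univ A)) := by
  set Free := {x | occIntervalFree τ A Finset.univ x}
  set bot := occBot τ A Finset.univ (Finset.subset_univ A)
  have hIco : ∀ q, Set.Ico bot q = {x | occLE τ A Finset.univ bot x ∧
      occLE τ A Finset.univ x q ∧ x ≠ q} := fun q => by
    ext x
    simp [occLE_iff_le, lt_iff_le_and_ne]
  have hmu : IsMobiusFrom Set.univ bot (mu bot) := ⟨hone bot, fun q _ hbq => by
    rw [hrec bot q hbq.le hbq.ne, Set.univ_inter, hIco]⟩
  have hmuI : IsMobiusFrom Free bot (muI bot) :=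
    ⟨hIone bot (occIntervalFree_occBot _), fun q hq hbq => by
      rw [hIrec bot q (occIntervalFree_occBot _) hq hbq.le hbq.ne, hIco]
      rfl⟩
  have hcollapse : ∀ q, bot ≤ q → q ∉ Free →
      ∃ q', bot < q' ∧ q' < q ∧ ∀ x ∈ Free, bot ≤ x → (x ≤ q ↔ x ≤ q') := fun _ _ hq =>
    (exists_collapse_of_not_occIntervalFree _ hq).imp fun _ h =>
      ⟨h.1, h.2.1, fun x hx _ => h.2.2 x hx⟩
  exact hmu.eq_of_forall_notMem_eq_zero hmuI (fun _ => hmu.eq_zero_of_notMem_of_collapse hcollapse)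
    (occIntervalFree_occMk_iff.2 hfree) (occBot_le _ _)

/-- if the pair `(⟨σ⟩, τ)` is interval free, then the Möbius function of the
top interval computed in the interval-free subposet `I(⟨σ⟩, τ)` equals the one computed in
the full occurrence poset `[⟨σ⟩, τ]`. -/
theorem mobius_interval_free_subposet_eq {k n : ℕ}
    (σ : Equiv.Perm (Fin k)) (τ : Equiv.Perm (Fin n))
    (f : Fin k → Fin n) (hf : IsOccurrence σ τ f)
    (A : Finset (Fin n)) (hA : A = Finset.image f Finset.univ)
    (hfree : ¬ PairHasBlock τ A Finset.univ)
    (mu : OccPoset τ A Finset.univ → OccPoset τ A Finset.univ → ℤ)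
    (hone : ∀ q, mu q q = 1)
    (hzero : ∀ q q', ¬ occLE τ A Finset.univ q q' → mu q q' = 0)
    (hrec : ∀ q q', occLE τ A Finset.univ q q' → q ≠ q' →
      mu q q' = - ∑ᶠ x ∈ {x : OccPoset τ A Finset.univ |
        occLE τ A Finset.univ q x ∧ occLE τ A Finset.univ x q' ∧ x ≠ q'}, mu q x)
    (muI : OccPoset τ A Finset.univ → OccPoset τ A Finset.univ → ℤ)
    (hIone : ∀ q, occIntervalFree τ A Finset.univ q → muI q q = 1)
    (hIrec : ∀ q q', occIntervalFree τ A Finset.univ q → occIntervalFree τ A Finset.univ q' →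
      occLE τ A Finset.univ q q' → q ≠ q' →
      muI q q' = - ∑ᶠ x ∈ {x : OccPoset τ A Finset.univ | occIntervalFree τ A Finset.univ x ∧
        occLE τ A Finset.univ q x ∧ occLE τ A Finset.univ x q' ∧ x ≠ q'}, muI q x) :
    muI (occBot τ A Finset.univ (Finset.subset_univ A))
        (occTop τ A Finset.univ (Finset.subset_univ A)) =
      mu (occBot τ A Finset.univ (Finset.subset_univ A))
        (occTop τ A Finset.univ (Finset.subset_univ A)) :=
  mobius_interval_free_subposet_eq_general τ A hfree mu hone hrec muI hIone hIrec
end
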